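/- Let f : X → ℝ ∪ {+∞} be a proper, convex, lower semicontinuous and G-invariant function. Let ε > 0 and λ > 0, let x₀ ∈ Dom(f) be a G-invariant point, and let x₀* ∈ X*_G be a G-invariant functional with x₀* ∈ ∂_ε f(x₀). Then there exist a G-invariant point z ∈ Dom(f) and a functional x* ∈ X*_G such that x* ∈ ∂f(z), ‖z − x₀‖ ≤ ε/λ, and ‖x* − x₀*‖ ≤ λ. -/

import Mathlib

open Filter Topology MeasureTheory

/-- Weak Ekeland variational principle. -/
theorem ekeland_weak {α : Type*} [MetricSpace α] [CompleteSpace α]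
    (F : α → ℝ) (hlsc : LowerSemicontinuous F)
    (ε lam : ℝ) (hε : 0 < ε) (hlam : 0 < lam)
    (x₀ : α) (hF : ∀ x, F x₀ ≤ F x + ε) :
    ∃ z : α, F z ≤ F x₀ ∧ dist z x₀ ≤ ε / lam ∧ ∀ x, F z ≤ F x + lam * dist x z := by
  -- lower bound
  have hlb : ∀ x, F x₀ - ε ≤ F x := fun x => by linarith [hF x]
  set T : α → Set α := fun x => {y | F y + lam * dist y x ≤ F x} with hT
  have hxT : ∀ x, x ∈ T x := fun x => by simp [hT]
  have hbdd : ∀ x, BddBelow (F '' T x) := fun x =>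
    ⟨F x₀ - ε, fun r ⟨y, _, hy⟩ => hy ▸ hlb y⟩
  have hne : ∀ x, (F '' T x).Nonempty := fun x => ⟨F x, x, hxT x, rfl⟩
  -- choice of next point
  have hnext : ∀ (x : α) (n : ℕ), ∃ y ∈ T x, F y < sInf (F '' T x) + (1/2)^n := by
    intro x n
    have hpos : (0:ℝ) < (1/2)^n := by positivity
    obtain ⟨r, ⟨y, hy, rfl⟩, hr⟩ := exists_lt_of_csInf_lt (hne x)
      (lt_add_of_pos_right _ hpos)
    exact ⟨y, hy, hr⟩
  choose nxt hnxtT hnxtI using hnext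
  set seq : ℕ → α := fun n => Nat.rec x₀ (fun n x => nxt x n) n with hseq
  have hseq0 : seq 0 = x₀ := rfl
  have hseqS : ∀ n, seq (n+1) = nxt (seq n) n := fun n => rfl
  have hstep : ∀ n, F (seq (n+1)) + lam * dist (seq (n+1)) (seq n) ≤ F (seq n) := by
    intro n; rw [hseqS]; exact hnxtT (seq n) n
  have hmono : ∀ n, F (seq (n+1)) ≤ F (seq n) := by
    intro n
    have := hstep n
    nlinarith [dist_nonneg (x := seq (n+1)) (y := seq n)]
  have hanti : Antitone fun n => F (seq n) := antitone_nat_of_succ_le hmono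
  -- chain estimate
  have hchain : ∀ n m, n ≤ m → lam * dist (seq m) (seq n) ≤ F (seq n) - F (seq m) := by
    intro n m hnm
    induction m with
    | zero => simp_all
    | succ m ih =>
      rcases Nat.lt_or_ge n (m+1) with h | h
      · have hnm' : n ≤ m := Nat.lt_succ_iff.mp h
        have h1 := ih hnm'
        have h2 := hstep m
        have h3 := dist_triangle (seq (m+1)) (seq m) (seq n)
        nlinarith
      · have : n = m + 1 := le_antisymm hnm h
        subst this; simp
  -- limit of F values
  have hbdd2 : BddBelow (Set.range fun n => F (seq n)) :=
    ⟨F x₀ - ε, fun r ⟨n, hn⟩ => hn ▸ hlb _⟩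
  set L : ℝ := ⨅ n, F (seq n) with hL
  have hFL : Tendsto (fun n => F (seq n)) atTop (𝓝 L) :=
    tendsto_atTop_ciInf hanti hbdd2
  have hLle : ∀ n, L ≤ F (seq n) := fun n => ciInf_le hbdd2 n
  have hLlb : F x₀ - ε ≤ L := le_ciInf fun n => hlb _
  -- Cauchy
  have hcauchy : CauchySeq seq := by
    rw [Metric.cauchySeq_iff']
    intro δ hδ
    obtain ⟨N, hN⟩ := (Metric.tendsto_atTop.mp hFL) (lam * δ / 2) (by positivity)
    refine ⟨N, fun n hn => ?_⟩
    have h1 := hchain N n hn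
    have h2 := hN N le_rfl
    have h3 := hN n hn
    rw [Real.dist_eq] at h2 h3
    have h4 := hLle n
    have h5 := hLle N
    have habs2 := abs_lt.mp h2
    have habs3 := abs_lt.mp h3
    have : lam * dist (seq n) (seq N) < lam * δ := by nlinarith
    nlinarith
  obtain ⟨z, hz⟩ := cauchySeq_tendsto_of_complete hcauchy
  -- F z ≤ L
  have hFzL : F z ≤ L := by
    by_contra h
    push_neg at h
    obtain ⟨y, hy1, hy2⟩ := exists_between h
    have hev := hlsc z y hy2
    have h1 : ∀ᶠ n in atTop, y < F (seq n) := hz.eventually hev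
    have h2 : ∀ᶠ n in atTop, F (seq n) < y := hFL.eventually_lt_const hy1
    obtain ⟨n, hn1, hn2⟩ := (h1.and h2).exists
    linarith
  -- dist estimate
  have hdz : ∀ n, lam * dist z (seq n) ≤ F (seq n) - L := by
    intro n
    have h1 : Tendsto (fun m => lam * dist (seq m) (seq n)) atTop (𝓝 (lam * dist z (seq n))) :=
      (Tendsto.const_mul _ ((Continuous.dist continuous_id continuous_const).continuousAt.tendsto.comp hz))
    have h2 : Tendsto (fun m => F (seq n) - F (seq m)) atTop (𝓝 (F (seq n) - L)) :=
      tendsto_const_nhds.sub hFL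
    exact le_of_tendsto_of_tendsto h1 h2
      ((eventually_ge_atTop n).mono fun m hm => hchain n m hm)
  -- conclusions
  refine ⟨z, ?_, ?_, ?_⟩
  · have := hLle 0
    rw [hseq0] at this
    linarith [hFzL]
  · have h1 := hdz 0
    rw [hseq0] at h1
    rw [le_div_iff₀ hlam]
    nlinarith [hLlb]
  · -- main inequality
    intro x
    by_contra hcon
    push_neg at hcon
    have hxTn : ∀ n, x ∈ T (seq n) := by
      intro n
      have h1 := hdz n
      have h2 := dist_triangle x z (seq n)
      have h3 : dist x (seq n) ≤ dist x z + dist z (seq n) := h2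
      show F x + lam * dist x (seq n) ≤ F (seq n)
      nlinarith [hFzL]
    have hIx : ∀ n, F (seq (n+1)) < F x + (1/2)^n := by
      intro n
      have h1 := hnxtI (seq n) n
      rw [← hseqS] at h1
      have h2 : sInf (F '' T (seq n)) ≤ F x :=
        csInf_le (hbdd (seq n)) ⟨x, hxTn n, rfl⟩
      linarith
    have hLx : L ≤ F x := by
      have h1 : Tendsto (fun n => F (seq (n+1))) atTop (𝓝 L) :=
        hFL.comp (tendsto_add_atTop_nat 1)
      have h2 : Tendsto (fun n : ℕ => F x + (1/2:ℝ)^n) atTop (𝓝 (F x + 0)) :=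
        tendsto_const_nhds.add (tendsto_pow_atTop_nhds_zero_of_lt_one (by norm_num) (by norm_num))
      rw [add_zero] at h2
      exact le_of_tendsto_of_tendsto h1 h2 (Eventually.of_forall fun n => (hIx n).le)
    nlinarith [dist_nonneg (x := x) (y := z), hFzL]

/-- Plain Brønsted–Rockafellar theorem. -/
theorem brs_core {E : Type*} [NormedAddCommGroup E] [NormedSpace ℝ E] [CompleteSpace E]
    (f : E → EReal) (hne_bot : ∀ x, f x ≠ ⊥)
    (hconv : ∀ x y : E, ∀ a b : ℝ, 0 ≤ a → 0 ≤ b → a + b = 1 →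
      f (a • x + b • y) ≤ (a : EReal) * f x + (b : EReal) * f y)
    (hlsc : LowerSemicontinuous f)
    (ε lam : ℝ) (hε : 0 < ε) (hlam : 0 < lam)
    (x₀ : E) (hx₀dom : f x₀ ≠ ⊤)
    (x₀star : E →L[ℝ] ℝ)
    (hx₀starsub : ∀ x : E, ((x₀star (x - x₀) : ℝ) : EReal) ≤ f x - f x₀ + (ε : EReal)) :
    ∃ z : E, f z ≠ ⊤ ∧
      ∃ w : E →L[ℝ] ℝ, (∀ x : E, ((w (x - z) : ℝ) : EReal) ≤ f x - f z) ∧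
        ‖z - x₀‖ ≤ ε / lam ∧ ‖w - x₀star‖ ≤ lam := by
  classical
  have hcases : ∀ x : E, f x = ⊤ ∨ ∃ r : ℝ, f x = (r : EReal) := by
    intro x
    by_cases h : f x = ⊤
    · exact Or.inl h
    · exact Or.inr ⟨(f x).toReal, (EReal.coe_toReal h (hne_bot x)).symm⟩
  set c₀ : ℝ := (f x₀).toReal with hc₀
  have hfx₀ : f x₀ = (c₀ : EReal) := (EReal.coe_toReal hx₀dom (hne_bot x₀)).symm
  -- lower bound on `f x - x₀star x`
  have hψlb : ∀ (x : E) (r : ℝ), f x = (r : EReal) →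
      c₀ - x₀star x₀ - ε ≤ r - x₀star x := by
    intro x r hr
    have h := hx₀starsub x
    rw [hr, hfx₀] at h
    rw [map_sub] at h
    have : ((x₀star x - x₀star x₀ : ℝ) : EReal) ≤ ((r - c₀ + ε : ℝ) : EReal) := by
      refine h.trans_eq ?_
      rw [← EReal.coe_sub, ← EReal.coe_add]
    rw [EReal.coe_le_coe_iff] at this
    linarith
  set M : ℝ := c₀ - x₀star x₀ + ε + 1 with hM
  set F : E → ℝ := fun x => (min (f x - ((x₀star x : ℝ) : EReal)) ((M : ℝ) : EReal)).toReal
    with hF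
  have hFtop : ∀ x, f x = ⊤ → F x = M := by
    intro x hx
    simp only [hF, hx, EReal.top_sub_coe]
    rw [min_eq_right le_top, EReal.toReal_coe]
  have hFcoe : ∀ (x : E) (r : ℝ), f x = (r : EReal) → F x = min (r - x₀star x) M := by
    intro x r hx
    simp only [hF, hx, ← EReal.coe_sub]
    rcases le_total (r - x₀star x) M with h | h
    · rw [min_eq_left (by exact_mod_cast h : ((r - x₀star x : ℝ) : EReal) ≤ (M : EReal)),
        min_eq_left h, EReal.toReal_coe]
    · rw [min_eq_right (by exact_mod_cast h : (M : EReal) ≤ ((r - x₀star x : ℝ) : EReal)),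
        min_eq_right h, EReal.toReal_coe]
  have hFx₀ : F x₀ = c₀ - x₀star x₀ := by
    rw [hFcoe x₀ c₀ hfx₀, min_eq_left (by rw [hM]; linarith)]
  have hFlb : ∀ x, c₀ - x₀star x₀ - ε ≤ F x := by
    intro x
    rcases hcases x with h | ⟨r, hr⟩
    · rw [hFtop x h, hM]; linarith
    · rw [hFcoe x r hr]
      exact le_min (hψlb x r hr) (by rw [hM]; linarith)
  have hFleM : ∀ x, F x ≤ M := by
    intro x
    rcases hcases x with h | ⟨r, hr⟩
    · rw [hFtop x h]
    · rw [hFcoe x r hr]; exact min_le_right _ _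
  -- lower semicontinuity of F
  have hFlsc : LowerSemicontinuous F := by
    intro x y hy
    have hyM : y < M := lt_of_lt_of_le hy (hFleM x)
    obtain ⟨c, hc1, hc2⟩ : ∃ c : ℝ, y + x₀star x < c ∧ (c : EReal) < f x := by
      rcases hcases x with h | ⟨r, hr⟩
      · exact ⟨y + x₀star x + 1, by linarith, by rw [h]; exact EReal.coe_lt_top _⟩
      · have hy' := hy
        rw [hFcoe x r hr] at hy'
        obtain ⟨h1', h2'⟩ := lt_min_iff.mp hy'
        obtain ⟨c, hc1, hc2⟩ := exists_between (show y + x₀star x < r by linarith)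
        exact ⟨c, hc1, by rw [hr]; exact_mod_cast hc2⟩
    have ev1 : ∀ᶠ x' in 𝓝 x, (c : EReal) < f x' := hlsc x c hc2
    have ev2 : ∀ᶠ x' in 𝓝 x, x₀star x' < c - y := by
      have : ContinuousAt (fun x' => x₀star x') x := x₀star.continuous.continuousAt
      exact this.eventually_lt continuousAt_const (by linarith)
    filter_upwards [ev1, ev2] with x' h1 h2
    rcases hcases x' with h | ⟨r, hr⟩
    · rw [hFtop x' h]; exact hyM
    · rw [hFcoe x' r hr]
      refine lt_min ?_ hyM
      rw [hr] at h1
      have : c < r := by exact_mod_cast h1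
      linarith
  -- Ekeland
  obtain ⟨z, hz1, hz2, hz3⟩ := ekeland_weak F hFlsc ε lam hε hlam x₀
    (fun x => by have := hFlb x; rw [hFx₀]; linarith)
  have hzdom : f z ≠ ⊤ := by
    intro h
    rw [hFtop z h, hFx₀, hM] at hz1
    linarith
  obtain ⟨fz, hfz⟩ : ∃ r : ℝ, f z = (r : EReal) := by
    rcases hcases z with h | h
    · exact absurd h hzdom
    · exact h
  have hFz : F z = fz - x₀star z := by
    rw [hFcoe z fz hfz]
    refine min_eq_left ?_
    by_contra h
    push_neg at h
    rw [hFcoe z fz hfz, min_eq_right h.le, hFx₀, hM] at hz1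
    linarith
  -- Ekeland inequality in convenient form
  have hEk : ∀ (x : E) (r : ℝ), f x = (r : EReal) →
      fz - x₀star z ≤ r - x₀star x + lam * ‖x - z‖ := by
    intro x r hr
    have h := hz3 x
    rw [hFz, hFcoe x r hr, dist_eq_norm] at h
    have := min_le_left (r - x₀star x) M
    linarith
  -- separation
  set A : Set (E × ℝ) := {p | p.2 + lam * ‖p.1‖ < 0} with hA
  have hAopen : IsOpen A := by
    have : Continuous fun p : E × ℝ => p.2 + lam * ‖p.1‖ :=
      continuous_snd.add (continuous_const.mul continuous_fst.norm)
    exact isOpen_lt this continuous_const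
  have hAconv : Convex ℝ A := by
    intro p hp q hq a b ha hb hab
    simp only [hA, Set.mem_setOf_eq, Prod.fst_add, Prod.snd_add, Prod.smul_fst,
      Prod.smul_snd, smul_eq_mul] at *
    have hn : ‖a • p.1 + b • q.1‖ ≤ a * ‖p.1‖ + b * ‖q.1‖ := by
      calc ‖a • p.1 + b • q.1‖ ≤ ‖a • p.1‖ + ‖b • q.1‖ := norm_add_le _ _
        _ = a * ‖p.1‖ + b * ‖q.1‖ := by
          rw [norm_smul, norm_smul, Real.norm_eq_abs, Real.norm_eq_abs,
            abs_of_nonneg ha, abs_of_nonneg hb]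
    rcases eq_or_lt_of_le ha with ha0 | ha0
    · have hb1 : b = 1 := by linarith
      simp only [← ha0, hb1, zero_mul, zero_smul, one_smul, zero_add, one_mul] at *
      linarith [hq]
    · rcases eq_or_lt_of_le hb with hb0 | hb0
      · have ha1 : a = 1 := by linarith
        simp only [← hb0, ha1, zero_mul, zero_smul, one_smul, add_zero, one_mul] at *
        linarith [hp]
      · nlinarith [mul_lt_mul_of_pos_left hp ha0, mul_lt_mul_of_pos_left hq hb0]
  set B : Set (E × ℝ) := {p | f (z + p.1) ≤ ((fz + x₀star p.1 + p.2 : ℝ) : EReal)} with hB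
  have hBmem : ∀ p ∈ B, ∃ r : ℝ, f (z + p.1) = (r : EReal) ∧ r ≤ fz + x₀star p.1 + p.2 := by
    intro p hp
    rcases hcases (z + p.1) with h | ⟨r, hr⟩
    · rw [hB, Set.mem_setOf_eq, h, top_le_iff] at hp
      exact absurd hp (EReal.coe_ne_top _)
    · refine ⟨r, hr, ?_⟩
      rw [hB, Set.mem_setOf_eq, hr, EReal.coe_le_coe_iff] at hp
      exact hp
  have hBconv : Convex ℝ B := by
    intro p hp q hq a b ha hb hab
    obtain ⟨r1, hr1, hr1'⟩ := hBmem p hp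
    obtain ⟨r2, hr2, hr2'⟩ := hBmem q hq
    show f (z + (a • p + b • q).1) ≤ _
    have hcombo : z + (a • p + b • q).1 = a • (z + p.1) + b • (z + q.1) := by
      simp only [Prod.fst_add, Prod.smul_fst]
      rw [smul_add, smul_add]
      rw [show a • z + a • p.1 + (b • z + b • q.1) =
        (a • z + b • z) + (a • p.1 + b • q.1) by abel, ← add_smul, hab, one_smul]
    rw [hcombo]
    calc f (a • (z + p.1) + b • (z + q.1)) ≤
        (a : EReal) * f (z + p.1) + (b : EReal) * f (z + q.1) := hconv _ _ a b ha hb hab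
      _ = ((a * r1 + b * r2 : ℝ) : EReal) := by
          rw [hr1, hr2, ← EReal.coe_mul, ← EReal.coe_mul, ← EReal.coe_add]
      _ ≤ _ := by
          rw [EReal.coe_le_coe_iff]
          simp only [Prod.fst_add, Prod.smul_fst, Prod.snd_add, Prod.smul_snd, smul_eq_mul,
            map_add, _root_.map_smul, smul_eq_mul]
          have e1 : a * r1 ≤ a * fz + a * x₀star p.1 + a * p.2 := by nlinarith
          have e2 : b * r2 ≤ b * fz + b * x₀star q.1 + b * q.2 := by nlinarith
          have e3 : a * fz + b * fz = fz := by rw [← add_mul, hab, one_mul]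
          linarith
  have hdisj : Disjoint A B := by
    rw [Set.disjoint_left]
    intro p hpA hpB
    obtain ⟨r, hr, hr'⟩ := hBmem p hpB
    have h1 := hEk (z + p.1) r hr
    rw [map_add] at h1
    simp only [add_sub_cancel_left] at h1
    rw [hA, Set.mem_setOf_eq] at hpA
    linarith
  obtain ⟨u, s₀, hu1, hu2⟩ := geometric_hahn_banach_open hAconv hAopen hBconv hdisj
  set u₁ : E →L[ℝ] ℝ := u.comp (ContinuousLinearMap.inl ℝ E ℝ) with hu₁
  set c : ℝ := u (0, 1) with hc
  have huval : ∀ (v : E) (t : ℝ), u (v, t) = u₁ v + t * c := by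
    intro v t
    have : (v, t) = ((v, (0:ℝ)) + t • ((0:E), (1:ℝ))) := by
      simp [Prod.ext_iff]
    rw [this, map_add, _root_.map_smul, smul_eq_mul]
    rfl
  have h00B : ((0 : E), (0 : ℝ)) ∈ B := by
    simp only [hB, Set.mem_setOf_eq, add_zero, map_zero, hfz]
    exact le_refl _
  have hs₀le : s₀ ≤ 0 := by
    have := hu2 _ h00B
    rw [huval 0 0] at this
    simpa using this
  have hAmem : ∀ (v : E) (η : ℝ), 0 < η → u₁ v + (-(lam * ‖v‖) - η) * c < s₀ := by
    intro v η hη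
    have hmem : (v, -(lam * ‖v‖) - η) ∈ A := by
      simp only [hA, Set.mem_setOf_eq]
      linarith
    have := hu1 _ hmem
    rwa [huval] at this
  have hkey : ∀ η : ℝ, 0 < η → -(η * c) < s₀ := by
    intro η hη
    have h := hAmem 0 η hη
    simp only [map_zero, norm_zero, mul_zero, neg_zero, zero_sub, zero_add, neg_mul] at h
    exact h
  have hcpos : 0 < c := by
    have := hkey 1 one_pos
    have h1 : -c < s₀ := by linarith [this]
    linarith
  have hs₀0 : 0 ≤ s₀ := by
    by_contra hs
    push_neg at hs
    have hη : 0 < -s₀ / (2 * c) := div_pos (by linarith) (by linarith)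
    have h := hkey _ hη
    have heq : -((-s₀ / (2 * c)) * c) = s₀ / 2 := by field_simp
    rw [heq] at h
    linarith
  have hs₀ : s₀ = 0 := le_antisymm hs₀le hs₀0
  have hbound : ∀ v : E, u₁ v ≤ lam * c * ‖v‖ := by
    intro v
    by_contra h
    push_neg at h
    set d : ℝ := u₁ v - lam * c * ‖v‖ with hd
    have hdpos : 0 < d := by linarith
    have hη : 0 < d / (2 * c) := div_pos hdpos (by linarith)
    have h2 := hAmem v _ hη
    rw [hs₀] at h2
    have hexp : (-(lam * ‖v‖) - d / (2 * c)) * c = -(lam * c * ‖v‖) - d / 2 := by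
      field_simp
    rw [hexp] at h2
    linarith
  set w : E →L[ℝ] ℝ := (-(c⁻¹)) • u₁ + x₀star with hw
  have hsub : ∀ (x : E) (r : ℝ), f x = (r : EReal) → w (x - z) ≤ r - fz := by
    intro x r hr
    have hmem : ((x - z : E), (r - fz - x₀star (x - z) : ℝ)) ∈ B := by
      simp only [hB, Set.mem_setOf_eq, add_sub_cancel, hr]
      rw [EReal.coe_le_coe_iff]
      linarith
    have h1 := hu2 _ hmem
    rw [huval, hs₀] at h1
    have h2 : -(u₁ (x - z)) ≤ (r - fz - x₀star (x - z)) * c := by linarith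
    have h3 : -(c⁻¹) * u₁ (x - z) ≤ r - fz - x₀star (x - z) := by
      rw [← mul_le_mul_iff_of_pos_right hcpos]
      have heq : -(c⁻¹) * u₁ (x - z) * c = -(u₁ (x - z)) := by
        field_simp
      rw [heq]
      exact h2
    simp only [hw, ContinuousLinearMap.add_apply, ContinuousLinearMap.smul_apply, smul_eq_mul]
    linarith
  have hwnorm : ‖w - x₀star‖ ≤ lam := by
    have hwx : w - x₀star = (-(c⁻¹)) • u₁ := by
      rw [hw]; abel
    rw [hwx]
    refine ContinuousLinearMap.opNorm_le_bound _ hlam.le fun v => ?_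
    simp only [ContinuousLinearMap.smul_apply, smul_eq_mul, Real.norm_eq_abs]
    have h1 := hbound v
    have h2 := hbound (-v)
    rw [map_neg] at h2
    rw [norm_neg] at h2
    have habs : |u₁ v| ≤ lam * c * ‖v‖ := abs_le.mpr ⟨by linarith, h1⟩
    rw [abs_mul, abs_neg, abs_inv, abs_of_pos hcpos]
    rw [← mul_le_mul_iff_of_pos_right hcpos]
    have heq : c⁻¹ * |u₁ v| * c = |u₁ v| := by field_simp
    rw [heq]
    calc |u₁ v| ≤ lam * c * ‖v‖ := habs
      _ = lam * ‖v‖ * c := by ring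
  refine ⟨z, hzdom, w, ?_, ?_, hwnorm⟩
  · intro x
    rcases hcases x with h | ⟨r, hr⟩
    · rw [h, hfz, EReal.top_sub_coe]
      exact le_top
    · rw [hr, hfz, ← EReal.coe_sub, EReal.coe_le_coe_iff]
      exact hsub x r hr
  · rw [← dist_eq_norm]
    exact hz2

/-- **Group invariant Brønsted-Rockafellar theorem.**
Let `f : X → ℝ ∪ {+∞}` be proper, convex, lower semicontinuous and `G`-invariant. Given
`ε, λ > 0`, a `G`-invariant point `x₀ ∈ Dom f` and a `G`-invariant functional
`x₀* ∈ ∂_ε f(x₀)`, there exist a `G`-invariant point `z ∈ Dom f` and a `G`-invariant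
functional `x* ∈ ∂f(z)` with `‖z - x₀‖ ≤ ε/λ` and `‖x* - x₀*‖ ≤ λ`. -/
theorem group_invariant_bronsted_rockafellar
    {X : Type*} [NormedAddCommGroup X] [NormedSpace ℝ X] [CompleteSpace X]
    {G : Type*} [Group G] [TopologicalSpace G] [IsTopologicalGroup G] [CompactSpace G]
    (ρ : G →* (X ≃L[ℝ] X))
    (hactcont : Continuous fun p : G × X => ρ p.1 p.2)
    (hnorminv : ∀ (g : G) (x : X), ‖ρ g x‖ = ‖x‖)
    (f : X → EReal)
    (hne_bot : ∀ x, f x ≠ ⊥) (hproper : ∃ x, f x ≠ ⊤)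
    (hconv : ∀ x y : X, ∀ a b : ℝ, 0 ≤ a → 0 ≤ b → a + b = 1 →
      f (a • x + b • y) ≤ (a : EReal) * f x + (b : EReal) * f y)
    (hlsc : LowerSemicontinuous f)
    (hGinv : ∀ (g : G) (x : X), f (ρ g x) = f x)
    (ε lam : ℝ) (hε : 0 < ε) (hlam : 0 < lam)
    (x₀ : X) (hx₀dom : f x₀ ≠ ⊤) (hx₀inv : ∀ g : G, ρ g x₀ = x₀)
    (x₀star : X →L[ℝ] ℝ) (hx₀starinv : ∀ (g : G) (x : X), x₀star (ρ g x) = x₀star x)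
    (hx₀starsub : ∀ x : X, ((x₀star (x - x₀) : ℝ) : EReal) ≤ f x - f x₀ + (ε : EReal)) :
    ∃ z : X, (∀ g : G, ρ g z = z) ∧ f z ≠ ⊤ ∧
      ∃ xstar : X →L[ℝ] ℝ, (∀ (g : G) (x : X), xstar (ρ g x) = xstar x) ∧
        (∀ x : X, ((xstar (x - z) : ℝ) : EReal) ≤ f x - f z) ∧
        ‖z - x₀‖ ≤ ε / lam ∧ ‖xstar - x₀star‖ ≤ lam := by
  classical
  letI : MeasurableSpace G := borel G
  haveI : BorelSpace G := ⟨rfl⟩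
  letI : MeasurableSpace X := borel X
  haveI : BorelSpace X := ⟨rfl⟩
  -- Haar probability measure and its inverse
  set K₀ : TopologicalSpace.PositiveCompacts G := ⟨⟨Set.univ, isCompact_univ⟩, by simp⟩ with hK₀
  set μ : Measure G := Measure.haarMeasure K₀ with hμ
  haveI hprob : IsProbabilityMeasure μ := ⟨by
    have := Measure.haarMeasure_self (K₀ := K₀)
    simpa [hK₀] using this⟩
  set ν : Measure G := μ.inv with hν
  haveI hprobν : IsProbabilityMeasure ν := ⟨by
    rw [hν, Measure.inv_apply]
    simpa using hprob.measure_univ⟩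
  -- continuity and integrability of orbit maps
  have hcont : ∀ x : X, Continuous fun a : G => ρ a x := fun x =>
    hactcont.comp (continuous_id.prodMk continuous_const)
  have hint : ∀ (m : Measure G) [IsProbabilityMeasure m], ∀ x : X,
      Integrable (fun a => ρ a x) m := by
    intro m _ x
    have hc := hcont x
    have hsm : StronglyMeasurable fun a : G => ρ a x :=
      stronglyMeasurable_iff_measurable_separable.2
        ⟨hc.measurable, (isCompact_range hc).isSeparable⟩
    refine ⟨hsm.aestronglyMeasurable, HasFiniteIntegral.of_bounded (C := ‖x‖) ?_⟩
    exact Eventually.of_forall fun a => le_of_eq (hnorminv a x)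
  -- abstract averaging facts
  have hnormint : ∀ (m : Measure G) [IsProbabilityMeasure m], ∀ x : X,
      ‖∫ a, ρ a x ∂m‖ ≤ ‖x‖ := by
    intro m _ x
    calc ‖∫ a, ρ a x ∂m‖ ≤ ∫ a, ‖ρ a x‖ ∂m := norm_integral_le_integral_norm _
      _ = ‖x‖ := by
          simp only [hnorminv]
          simp [measure_univ]
  have hfle : ∀ (m : Measure G) [IsProbabilityMeasure m], ∀ x : X,
      f (∫ a, ρ a x ∂m) ≤ f x := by
    intro m _ x
    by_cases hx : f x = ⊤
    · rw [hx]; exact le_top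
    · obtain ⟨r, hr⟩ : ∃ r : ℝ, f x = (r : EReal) :=
        ⟨(f x).toReal, (EReal.coe_toReal hx (hne_bot x)).symm⟩
      set s : Set X := {y | f y ≤ (r : EReal)} with hs
      have hsc : IsClosed s := hlsc.isClosed_preimage r
      have hsconv : Convex ℝ s := by
        intro y1 h1 y2 h2 a b ha hb hab
        have hy1 : f y1 ≠ ⊤ := by
          intro h
          rw [hs, Set.mem_setOf_eq, h, top_le_iff] at h1
          exact EReal.coe_ne_top r h1
        have hy2 : f y2 ≠ ⊤ := by
          intro h
          rw [hs, Set.mem_setOf_eq, h, top_le_iff] at h2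
          exact EReal.coe_ne_top r h2
        obtain ⟨r1, hr1⟩ : ∃ q : ℝ, f y1 = (q : EReal) :=
          ⟨(f y1).toReal, (EReal.coe_toReal hy1 (hne_bot y1)).symm⟩
        obtain ⟨r2, hr2⟩ : ∃ q : ℝ, f y2 = (q : EReal) :=
          ⟨(f y2).toReal, (EReal.coe_toReal hy2 (hne_bot y2)).symm⟩
        have hr1' : r1 ≤ r := by
          rw [hs, Set.mem_setOf_eq, hr1, EReal.coe_le_coe_iff] at h1; exact h1
        have hr2' : r2 ≤ r := by
          rw [hs, Set.mem_setOf_eq, hr2, EReal.coe_le_coe_iff] at h2; exact h2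
        show f (a • y1 + b • y2) ≤ (r : EReal)
        calc f (a • y1 + b • y2) ≤ (a : EReal) * f y1 + (b : EReal) * f y2 :=
              hconv _ _ a b ha hb hab
          _ = ((a * r1 + b * r2 : ℝ) : EReal) := by
              rw [hr1, hr2, ← EReal.coe_mul, ← EReal.coe_mul, ← EReal.coe_add]
          _ ≤ (r : EReal) := by
              rw [EReal.coe_le_coe_iff]
              have e1 : a * r1 ≤ a * r := mul_le_mul_of_nonneg_left hr1' ha
              have e2 : b * r2 ≤ b * r := mul_le_mul_of_nonneg_left hr2' hb
              have e3 : a * r + b * r = r := by rw [← add_mul, hab, one_mul]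
              linarith
      have hmem : ∀ a : G, ρ a x ∈ s := fun a => by
        rw [hs, Set.mem_setOf_eq, hGinv a x, hr]
      have := hsconv.integral_mem hsc (Eventually.of_forall hmem) (hint m x)
      rw [hs, Set.mem_setOf_eq, ← hr] at this
      exact this
  have hx₀starint : ∀ (m : Measure G) [IsProbabilityMeasure m], ∀ x : X,
      x₀star (∫ a, ρ a x ∂m) = x₀star x := by
    intro m _ x
    rw [← ContinuousLinearMap.integral_comp_comm x₀star (hint m x)]
    simp only [hx₀starinv]
    simp [measure_univ]
  have hfixed : ∀ (m : Measure G) [IsProbabilityMeasure m], ∀ x : X,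
      (∀ g : G, ρ g x = x) → (∫ a, ρ a x ∂m) = x := by
    intro m _ x hx
    simp only [hx]
    simp [measure_univ]
  -- the two averaging maps
  set Pr : X → X := fun x => ∫ a, ρ a x ∂ν with hPrdef
  set Pl : X → X := fun x => ∫ a, ρ a x ∂μ with hPldef
  have hPlfix : ∀ (g : G) (x : X), ρ g (Pl x) = Pl x := by
    intro g x
    have h1 : ρ g (Pl x) = ∫ a, ρ g (ρ a x) ∂μ :=
      (ContinuousLinearMap.integral_comp_comm ((ρ g : X ≃L[ℝ] X) : X →L[ℝ] X)
        (hint μ x)).symm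
    have h2 : (fun a : G => ρ g (ρ a x)) = fun a : G => ρ (g * a) x := by
      funext a
      rw [map_mul]
      rfl
    rw [h1, h2, integral_mul_left_eq_self (fun a : G => ρ a x) g]
  have hPrinv : ∀ (g : G) (x : X), Pr (ρ g x) = Pr x := by
    intro g x
    have h2 : (fun a : G => ρ a (ρ g x)) = fun a : G => ρ (a * g) x := by
      funext a
      rw [map_mul]
      rfl
    show (∫ a, ρ a (ρ g x) ∂ν) = _
    rw [h2, integral_mul_right_eq_self (fun a : G => ρ a x) g]
  -- invariant subspace
  set Y : Submodule ℝ X :=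
    { carrier := {x | ∀ g : G, ρ g x = x}
      add_mem' := fun hx hy g => by rw [map_add, hx g, hy g]
      zero_mem' := fun g => map_zero (ρ g)
      smul_mem' := fun c x hx g => by rw [_root_.map_smul, hx g] } with hYdef
  have hYclosed : IsClosed (Y : Set X) := by
    have : (Y : Set X) = ⋂ g : G, {x : X | ρ g x = x} := by
      ext x
      simp [hYdef, Set.mem_iInter]
    rw [this]
    exact isClosed_iInter fun g => isClosed_eq (ρ g).continuous continuous_id
  haveI : CompleteSpace Y := hYclosed.completeSpace_coe
  -- combined averaging projection onto Y
  have hPmem : ∀ x : X, Pl (Pr x) ∈ Y := fun x g => hPlfix g (Pr x)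
  have hPadd : ∀ x y : X, Pl (Pr (x + y)) = Pl (Pr x) + Pl (Pr y) := by
    intro x y
    have h1 : Pr (x + y) = Pr x + Pr y := by
      show (∫ a, ρ a (x + y) ∂ν) = _
      simp only [map_add]
      exact integral_add (hint ν x) (hint ν y)
    rw [h1]
    show (∫ a, ρ a (Pr x + Pr y) ∂μ) = _
    simp only [map_add]
    exact integral_add (hint μ (Pr x)) (hint μ (Pr y))
  have hPsmul : ∀ (c : ℝ) (x : X), Pl (Pr (c • x)) = c • Pl (Pr x) := by
    intro c x
    have h1 : Pr (c • x) = c • Pr x := by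
      show (∫ a, ρ a (c • x) ∂ν) = _
      simp only [_root_.map_smul]
      exact integral_smul c _
    rw [h1]
    show (∫ a, ρ a (c • Pr x) ∂μ) = _
    simp only [_root_.map_smul]
    exact integral_smul c _
  have hPnorm : ∀ x : X, ‖Pl (Pr x)‖ ≤ ‖x‖ :=
    fun x => (hnormint μ (Pr x)).trans (hnormint ν x)
  set Pc : X →L[ℝ] Y := LinearMap.mkContinuous
    { toFun := fun x => (⟨Pl (Pr x), hPmem x⟩ : Y)
      map_add' := fun x y => Subtype.ext (hPadd x y)
      map_smul' := fun c x => Subtype.ext (hPsmul c x) } 1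
    (fun x => by
      rw [one_mul]
      exact hPnorm x) with hPcdef
  have hPcapply : ∀ x : X, (Pc x : X) = Pl (Pr x) := fun x => rfl
  -- apply plain Brønsted-Rockafellar on Y
  have hx₀Y : x₀ ∈ Y := fun g => hx₀inv g
  obtain ⟨zY, hzdom, w, hwsub, hwdist, hwnorm⟩ :=
    brs_core (E := ↥Y) (fun y => f ↑y) (fun y => hne_bot ↑y)
      (by
        intro y1 y2 a b ha hb hab
        show f ((a • y1 + b • y2 : Y) : X) ≤ _
        have hcoe : ((a • y1 + b • y2 : Y) : X) = a • (y1 : X) + b • (y2 : X) := by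
          simp
        rw [hcoe]
        exact hconv _ _ a b ha hb hab)
      (LowerSemicontinuous.comp hlsc continuous_subtype_val)
      ε lam hε hlam ⟨x₀, hx₀Y⟩ hx₀dom (x₀star.comp Y.subtypeL)
      (by
        intro y
        have : (x₀star.comp Y.subtypeL) (y - ⟨x₀, hx₀Y⟩) = x₀star ((y : X) - x₀) := by
          simp [ContinuousLinearMap.comp_apply]
        rw [this]
        exact hx₀starsub (y : X))
  set z : X := (zY : X) with hz
  have hzinv : ∀ g : G, ρ g z = z := zY.2
  have hPcz : Pc z = zY := by
    apply Subtype.ext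
    rw [hPcapply]
    have h1 : Pr z = z := hfixed ν z hzinv
    rw [h1]
    exact hfixed μ z hzinv
  refine ⟨z, hzinv, hzdom, w.comp Pc, ?_, ?_, ?_, ?_⟩
  · -- invariance of xstar
    intro g x
    simp only [ContinuousLinearMap.comp_apply]
    congr 1
    apply Subtype.ext
    rw [hPcapply, hPcapply, hPrinv]
  · -- subgradient property
    intro x
    simp only [ContinuousLinearMap.comp_apply]
    have h1 : Pc (x - z) = Pc x - zY := by rw [map_sub, hPcz]
    rw [h1]
    have h2 := hwsub (Pc x)
    have h3 : f ((Pc x : Y) : X) ≤ f x := by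
      rw [hPcapply]
      exact (hfle μ (Pr x)).trans (hfle ν x)
    calc ((w (Pc x - zY) : ℝ) : EReal) ≤ f ((Pc x : Y) : X) - f z := h2
      _ ≤ f x - f z := EReal.sub_le_sub h3 (le_refl _)
  · -- distance bound
    have : z - x₀ = ((zY - ⟨x₀, hx₀Y⟩ : Y) : X) := by push_cast; rfl
    rw [this]
    exact hwdist
  · -- norm bound
    refine ContinuousLinearMap.opNorm_le_bound _ hlam.le fun x => ?_
    have h1 : x₀star x = (x₀star.comp Y.subtypeL) (Pc x) := by
      simp only [ContinuousLinearMap.comp_apply, Submodule.subtypeL_apply]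
      rw [hPcapply, hx₀starint μ (Pr x), hx₀starint ν x]
    have h2 : (w.comp Pc - x₀star) x = (w - x₀star.comp Y.subtypeL) (Pc x) := by
      simp only [ContinuousLinearMap.sub_apply, ContinuousLinearMap.comp_apply]
      rw [h1]
      rfl
    have hPcxnorm : ‖Pc x‖ ≤ ‖x‖ := by
      have : ‖Pc x‖ = ‖((Pc x : Y) : X)‖ := rfl
      rw [this, hPcapply]
      exact hPnorm x
    rw [h2]
    calc ‖(w - x₀star.comp Y.subtypeL) (Pc x)‖
        ≤ ‖w - x₀star.comp Y.subtypeL‖ * ‖Pc x‖ := ContinuousLinearMap.le_opNorm _ _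
      _ ≤ lam * ‖x‖ := mul_le_mul hwnorm hPcxnorm (norm_nonneg _) hlam.le
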